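/- arXiv:1008.4739 — 2 statements merged into one kernel-verified Lean document; each statement's English description precedes it below -/
import Mathlib

section
/- Let T be an ω₁-tree and U ⊆ T an open subset of T in the tree topology. Then (U^p)^p = U^p. -/
/-- A tree: a type `T` with a strict partial order `lt` such that for each `x`,
the set of predecessors of `x` is well-ordered by `lt`. -/
structure TreeOrder (T : Type) where
  lt : T → T → Prop
  trans : ∀ {x y z : T}, lt x y → lt y z → lt x z
  irrefl : ∀ x : T, ¬ lt x x
  wellOrdered : ∀ x : T, IsWellOrder {y : T // lt y x} fun a b => lt a.1 b.1

namespace TreeOrder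

variable {T : Type} (S : TreeOrder T)

/-- `x↓`, the set of predecessors of `x`. -/
def below (x : T) : Set T := {y | S.lt y x}

/-- `x↑`, the set of elements above `x`. -/
def above (x : T) : Set T := {y | S.lt x y}

/-- The height of a node: the order type of `x↓`. -/
noncomputable def height (x : T) : Ordinal :=
  @Ordinal.type {y : T // S.lt y x} (fun a b => S.lt a.1 b.1) (S.wellOrdered x)

/-- The `α`-th level `L_α(T)`. -/
def level (α : Ordinal) : Set T := {x | S.height x = α}

/-- A set `U` is open in the tree topology iff for every `y ∈ U` of limit height
there is `x ◁ y` with `x↑ ∩ y↓ ⊆ U`. -/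
def TreeOpen (U : Set T) : Prop :=
  ∀ y ∈ U, Order.IsSuccLimit (S.height y) →
    ∃ x, S.lt x y ∧ ∀ z, S.lt x z → S.lt z y → z ∈ U

/-- Continuity with respect to the tree topology on `T`:
preimages of open sets are open in the tree topology. -/
def TContinuous {B : Type} [TopologicalSpace B] (ψ : T → B) : Prop :=
  ∀ V : Set B, IsOpen V → S.TreeOpen (ψ ⁻¹' V)

/-- `A ⊆ T` is discrete in the tree topology: every point of `A` is isolated in `A`. -/
def TDiscrete (A : Set T) : Prop :=
  ∀ a ∈ A, ∃ U : Set T, S.TreeOpen U ∧ a ∈ U ∧ U ∩ A = {a}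

/-- `T` is an `ω₁`-tree: it has cardinality `ℵ₁`, all levels are countable, and
the level `ω₁` is empty. -/
def IsOmega1Tree : Prop :=
  Cardinal.mk T = Cardinal.aleph 1 ∧
  (∀ α : Ordinal, (S.level α).Countable) ∧
  S.level (Cardinal.aleph 1).ord = ∅

/-- An Aronszajn tree is an `ω₁`-tree with no uncountable chains. -/
def IsAronszajn : Prop :=
  S.IsOmega1Tree ∧ ∀ C : Set T, IsChain S.lt C → C.Countable

/-- A special Aronszajn tree: an Aronszajn tree which is a countable union of antichains. -/
def IsSpecialAronszajn : Prop :=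
  S.IsAronszajn ∧
  ∃ A : ℕ → Set T, (∀ n, IsAntichain S.lt (A n)) ∧ (⋃ n, A n) = Set.univ

end TreeOrder

/-- `C` is closed in `κ`: it contains each of its limit points below `κ`. -/
def IsClosedIn (C : Set Ordinal.{0}) (κ : Ordinal.{0}) : Prop :=
  ∀ α < κ, α ≠ 0 → (∀ β < α, ∃ γ ∈ C, β < γ ∧ γ < α) → α ∈ C

/-- `C` is club in `κ`: closed and unbounded in `κ`. -/
def IsClubIn (C : Set Ordinal.{0}) (κ : Ordinal.{0}) : Prop :=
  IsClosedIn C κ ∧ ∀ α < κ, ∃ β ∈ C, α < β ∧ β < κ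

/-- `A` is stationary in `κ`: it meets every club subset of `κ`. -/
def IsStationaryIn (A : Set Ordinal.{0}) (κ : Ordinal.{0}) : Prop :=
  ∀ C : Set Ordinal, IsClubIn C κ → (A ∩ C).Nonempty

/-- A subset of a tree is stationary iff its set of heights is stationary in `ω₁`. -/
def TreeOrder.TStationary {T : Type} (S : TreeOrder T) (A : Set T) : Prop :=
  IsStationaryIn (S.height '' A) (Cardinal.aleph 1).ord

/-- The pruning `U^p` of `U`: all `x ∈ U` such that `x↑ ∩ U` is stationary. -/
def TreeOrder.prune {T : Type} (S : TreeOrder T) (U : Set T) : Set T :=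
  {x | x ∈ U ∧ S.TStationary (S.above x ∩ U)}

/-- The diamond principle `◊`: there is a sequence `⟨A_α : α < ω₁⟩` with `A_α ⊆ α`
such that for every `A ⊆ ω₁`, the set `{α : A ∩ α = A_α}` is stationary in `ω₁`. -/
def DiamondPrinciple : Prop :=
  ∃ A : Ordinal.{0} → Set Ordinal.{0},
    (∀ α, A α ⊆ Set.Iio α) ∧
    ∀ X : Set Ordinal.{0}, X ⊆ Set.Iio (Cardinal.aleph 1).ord →
      IsStationaryIn {α | X ∩ Set.Iio α = A α} (Cardinal.aleph 1).ord

/-!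
Let `x ∈ U^p` and suppose the heights of `x↑ ∩ U^p` miss a club `C₀`. For every `y ∉ U^p` fix a
club `C_y` missed by the heights of `y↑ ∩ U`; as the levels are countable, the diagonal
intersection `E` of the `C_y` is again club. Since `x↑ ∩ U` is stationary, it contains a node `y`
whose height is a limit point of `E ∩ C₀`. Openness of `U` at `y` yields `w ◁ y` above `x` in `U`
with height in `E ∩ C₀`. Then `w ∉ U^p`, yet `y ∈ w↑ ∩ U` has height in `E`, above the height
of `w`, hence in `C_w`: a contradiction.
-/

open Cardinal Filter Order

def IsAccPt (C : Set Ordinal.{0}) (α : Ordinal.{0}) : Prop :=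
  α ≠ 0 ∧ ∀ β < α, ∃ γ ∈ C, β < γ ∧ γ < α

def diagInter {ι : Type} (rank : ι → Ordinal.{0}) (C : ι → Set Ordinal.{0}) : Set Ordinal.{0} :=
  {α | ∀ i, rank i < α → α ∈ C i}

theorem IsAccPt.isSuccLimit {C : Set Ordinal.{0}} {α : Ordinal.{0}} (h : IsAccPt C α) :
    IsSuccLimit α := by
  refine Ordinal.isSuccLimit_iff.2 ⟨h.1, isSuccPrelimit_iff_succ_lt.2 fun β hβ => ?_⟩
  obtain ⟨γ, -, hβγ, hγα⟩ := h.2 β hβ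
  exact (succ_le_of_lt hβγ).trans_lt hγα

theorem IsClosedIn.mem_of_isAccPt {C : Set Ordinal.{0}} {κ α : Ordinal.{0}} (hC : IsClosedIn C κ)
    (hα : α < κ) (h : IsAccPt C α) : α ∈ C :=
  hC α hα h.1 h.2

theorem not_isStationaryIn_iff {A : Set Ordinal.{0}} {κ : Ordinal.{0}} :
    ¬ IsStationaryIn A κ ↔ ∃ C, IsClubIn C κ ∧ Disjoint A C := by
  simp [IsStationaryIn, Set.not_nonempty_iff_eq_empty, Set.disjoint_iff_inter_eq_empty]

theorem isClubIn_univ : IsClubIn Set.univ (aleph 1).ord :=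
  ⟨fun _ _ _ _ => trivial, fun α hα =>
    ⟨succ α, trivial, lt_succ α, (isSuccLimit_ord (aleph0_le_aleph 1)).succ_lt hα⟩⟩

theorem countable_Iio_of_lt_ord_aleph_one {α : Ordinal.{0}} (hα : α < (aleph 1).ord) :
    (Set.Iio α).Countable := by
  rw [← le_aleph0_iff_set_countable, mk_Iio_ordinal, lift_le_aleph0, ← lt_aleph_one_iff]
  exact lt_ord.1 hα

theorem exists_strictMono_iSup_lt (P : ℕ → Ordinal.{0} → Ordinal.{0} → Prop) {α : Ordinal.{0}}
    (hα : α < (aleph 1).ord)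
    (h : ∀ n, ∀ a < (aleph 1).ord, ∃ b, a < b ∧ b < (aleph 1).ord ∧ P n a b) :
    ∃ g : ℕ → Ordinal.{0}, StrictMono g ∧ α < ⨆ n, g n ∧ (⨆ n, g n) < (aleph 1).ord ∧
      ∀ n, P n (g n) (g (n + 1)) := by
  choose! f hf using h
  let g : ℕ → Ordinal.{0} := fun n => Nat.rec α f n
  have hg : ∀ n, g n < (aleph 1).ord := fun n => Nat.rec hα (fun n ih => (hf n _ ih).2.1) n
  have hmono : StrictMono g := strictMono_nat_of_lt_succ fun n => (hf n _ (hg n)).1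
  refine ⟨g, hmono, (hmono Nat.zero_lt_one).trans_le (Ordinal.le_iSup g 1), ?_,
    fun n => (hf n _ (hg n)).2.2⟩
  exact ord_aleph 1 ▸ Ordinal.iSup_lt_omega_one (ord_aleph 1 ▸ hg)

theorem isAccPt_iSup {C : Set Ordinal.{0}} {g : ℕ → Ordinal.{0}} (hg : StrictMono g)
    (hC : ∃ᶠ n in atTop, g n ∈ C) : IsAccPt C (⨆ n, g n) := by
  have hlt : ∀ n, g n < ⨆ m, g m := fun n => (hg n.lt_succ_self).trans_le (Ordinal.le_iSup g _)
  refine ⟨(pos_of_gt (hlt 0)).ne', fun β hβ => ?_⟩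
  obtain ⟨n, hn⟩ := Ordinal.lt_iSup_iff.1 hβ
  obtain ⟨m, hnm, hm⟩ := hC.forall_exists_of_atTop n
  exact ⟨g m, hm, hn.trans_le (hg.monotone hnm), hlt m⟩

theorem IsClubIn.iInter {ι : Type} [Countable ι] {C : ι → Set Ordinal.{0}}
    (hC : ∀ i, IsClubIn (C i) (aleph 1).ord) : IsClubIn (⋂ i, C i) (aleph 1).ord := by
  refine ⟨fun α hα hα0 hacc => Set.mem_iInter.2 fun i => (hC i).1 α hα hα0 fun β hβ => ?_,
    fun α hα => ?_⟩
  · obtain ⟨γ, hγ, hβγ⟩ := hacc β hβ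
    exact ⟨γ, Set.mem_iInter.1 hγ i, hβγ⟩
  cases isEmpty_or_nonempty ι
  · simpa using isClubIn_univ.2 α hα
  obtain ⟨e, he⟩ := exists_surjective_nat ι
  obtain ⟨g, hg, hαg, hgκ, hgC⟩ := exists_strictMono_iSup_lt (fun n _ b => b ∈ C (e n.unpair.1))
    hα fun n a ha => by
      obtain ⟨b, hb, hab⟩ := (hC _).2 a ha
      exact ⟨b, hab.1, hab.2, hb⟩
  refine ⟨_, Set.mem_iInter.2 fun i => (hC i).1.mem_of_isAccPt hgκ (isAccPt_iSup hg ?_), hαg, hgκ⟩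
  obtain ⟨k, rfl⟩ := he i
  -- the stage `Nat.pair k n` of the recursion serves the club `C (e k)`
  refine frequently_atTop.2 fun n => ⟨Nat.pair k n + 1, (Nat.right_le_pair k n).trans (Nat.le_succ _), ?_⟩
  simpa using hgC (Nat.pair k n)

theorem IsClubIn.inter {C₁ C₂ : Set Ordinal.{0}} (h₁ : IsClubIn C₁ (aleph 1).ord)
    (h₂ : IsClubIn C₂ (aleph 1).ord) : IsClubIn (C₁ ∩ C₂) (aleph 1).ord := by
  rw [Set.inter_eq_iInter]
  exact IsClubIn.iInter (Bool.forall_bool.2 ⟨h₂, h₁⟩)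

theorem isClubIn_setOf_isAccPt {C : Set Ordinal.{0}}
    (hC : ∀ α < (aleph 1).ord, ∃ β ∈ C, α < β ∧ β < (aleph 1).ord) :
    IsClubIn {α | IsAccPt C α} (aleph 1).ord := by
  refine ⟨fun α _ hα0 hacc => ⟨hα0, fun β hβ => ?_⟩, fun α hα => ?_⟩
  · obtain ⟨γ, hγ, hβγ, hγα⟩ := hacc β hβ
    obtain ⟨δ, hδ, hβδ, hδγ⟩ := hγ.2 β hβγ
    exact ⟨δ, hδ, hβδ, hδγ.trans hγα⟩
  obtain ⟨g, hg, hαg, hgκ, hgC⟩ := exists_strictMono_iSup_lt (fun _ _ b => b ∈ C) hα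
    fun _ a ha => by
      obtain ⟨b, hb, hab⟩ := hC a ha
      exact ⟨b, hab.1, hab.2, hb⟩
  exact ⟨_, isAccPt_iSup hg (frequently_atTop.2 fun n => ⟨n + 1, n.le_succ, hgC n⟩), hαg, hgκ⟩

theorem isClubIn_diagInter {ι : Type} {rank : ι → Ordinal.{0}} {C : ι → Set Ordinal.{0}}
    (hrank : ∀ α < (aleph 1).ord, {i | rank i < α}.Countable)
    (hC : ∀ i, IsClubIn (C i) (aleph 1).ord) : IsClubIn (diagInter rank C) (aleph 1).ord := by
  refine ⟨fun α hα hα0 hacc i hi => (hC i).1 α hα hα0 fun β hβ => ?_, fun α hα => ?_⟩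
  · obtain ⟨γ, hγ, hγ'⟩ := hacc (max β (rank i)) (max_lt hβ hi)
    exact ⟨γ, hγ i ((le_max_right _ _).trans_lt hγ'.1), (le_max_left _ _).trans_lt hγ'.1, hγ'.2⟩
  have step : ∀ a < (aleph 1).ord,
      ∃ b, a < b ∧ b < (aleph 1).ord ∧ ∀ i, rank i < a → b ∈ C i := by
    intro a ha
    have := (hrank a ha).to_subtype
    obtain ⟨b, hb, hab⟩ := (IsClubIn.iInter fun i : {i | rank i < a} => hC i).2 a ha
    exact ⟨b, hab.1, hab.2, fun i hi => Set.mem_iInter.1 hb ⟨i, hi⟩⟩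
  obtain ⟨g, hg, hαg, hgκ, hgC⟩ :=
    exists_strictMono_iSup_lt (fun _ a b => ∀ i, rank i < a → b ∈ C i) hα fun _ => step
  refine ⟨_, fun i hi => (hC i).1.mem_of_isAccPt hgκ (isAccPt_iSup hg ?_), hαg, hgκ⟩
  obtain ⟨n, hn⟩ := Ordinal.lt_iSup_iff.1 hi
  exact frequently_atTop.2 fun m => ⟨max n m + 1, (le_max_right n m).trans (Nat.le_succ _),
    hgC _ i (hn.trans_le (hg.monotone (le_max_left n m)))⟩

namespace TreeOrder

variable {T : Type} (S : TreeOrder T)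

theorem height_eq_typein {a y : T} (h : S.lt a y) :
    S.height a = @Ordinal.typein {z // S.lt z y} (fun p q => S.lt p.1 q.1)
      (S.wellOrdered y) ⟨a, h⟩ := by
  let := S.wellOrdered y
  let := S.wellOrdered a
  show Ordinal.type (fun p q : {z // S.lt z a} => S.lt p.1 q.1) = _
  rw [← Ordinal.type_subrel]
  exact Ordinal.type_eq.2 ⟨⟨⟨fun p => ⟨⟨p.1, S.trans p.2 h⟩, p.2⟩,
    fun q => ⟨q.1.1, q.2⟩, fun _ => rfl, fun _ => rfl⟩, Iff.rfl⟩⟩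

theorem height_lt_height {a b : T} (h : S.lt a b) : S.height a < S.height b := by
  let := S.wellOrdered b
  rw [S.height_eq_typein h]
  exact Ordinal.typein_lt_type _ _

theorem lt_of_height_lt_height {a b y : T} (ha : S.lt a y) (hb : S.lt b y)
    (h : S.height a < S.height b) : S.lt a b := by
  let := S.wellOrdered y
  rw [S.height_eq_typein ha, S.height_eq_typein hb] at h
  exact (Ordinal.typein_lt_typein (fun p q : {z // S.lt z y} => S.lt p.1 q.1)).1 h

theorem exists_lt_height_eq {y : T} {β : Ordinal} (h : β < S.height y) :
    ∃ a, S.lt a y ∧ S.height a = β := by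
  let := S.wellOrdered y
  obtain ⟨p, hp⟩ := Ordinal.typein_surj (fun p q : {z // S.lt z y} => S.lt p.1 q.1) h
  exact ⟨p.1, p.2, (S.height_eq_typein p.2).trans hp⟩

theorem countable_setOf_height_lt (hS : ∀ α, (S.level α).Countable) {α : Ordinal.{0}}
    (hα : α < (aleph 1).ord) : {y | S.height y < α}.Countable := by
  have h : {y | S.height y < α} = ⋃ β ∈ Set.Iio α, S.level β :=
    (Set.biUnion_preimage_singleton S.height (Set.Iio α)).symm
  exact h ▸ (countable_Iio_of_lt_ord_aleph_one hα).biUnion fun β _ => hS β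

variable {S} in
theorem TreeOpen.exists_between_height_mem {U : Set T} {F : Set Ordinal.{0}} (hU : S.TreeOpen U)
    {x y : T} (hy : y ∈ U) (hxy : S.lt x y) (hF : IsAccPt F (S.height y)) :
    ∃ w, S.lt x w ∧ S.lt w y ∧ w ∈ U ∧ S.height w ∈ F := by
  obtain ⟨z, hzy, hseg⟩ := hU y hy hF.isSuccLimit
  obtain ⟨β, hβF, hβ, hβy⟩ := hF.2 _ (max_lt (S.height_lt_height hzy) (S.height_lt_height hxy))
  obtain ⟨w, hwy, rfl⟩ := S.exists_lt_height_eq hβy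
  have hzw := S.lt_of_height_lt_height hzy hwy ((le_max_left _ _).trans_lt hβ)
  have hxw := S.lt_of_height_lt_height hxy hwy ((le_max_right _ _).trans_lt hβ)
  exact ⟨w, hxw, hwy, hseg w hzw hwy, hβF⟩

theorem exists_isClubIn_forall_height_notMem (hS : ∀ α, (S.level α).Countable) (A : T → Set T) :
    ∃ E, IsClubIn E (aleph 1).ord ∧
      ∀ y, ¬ S.TStationary (A y) → ∀ α ∈ E, S.height y < α → α ∉ S.height '' A y := by
  have hclub : ∀ y, ∃ C, IsClubIn C (aleph 1).ord ∧
      (¬ S.TStationary (A y) → Disjoint (S.height '' A y) C) := by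
    intro y
    by_cases hy : S.TStationary (A y)
    · exact ⟨_, isClubIn_univ, fun h => (h hy).elim⟩
    · obtain ⟨C, hC, hdisj⟩ := not_isStationaryIn_iff.1 hy
      exact ⟨C, hC, fun _ => hdisj⟩
  choose C hC hdisj using hclub
  exact ⟨diagInter S.height C, isClubIn_diagInter (fun _ => S.countable_setOf_height_lt hS) hC,
    fun y hy α hα hyα hαA => Set.disjoint_left.1 (hdisj y hy) hαA (hα y hyα)⟩

theorem tStationary_above_inter_prune (hS : ∀ α, (S.level α).Countable) {U : Set T}
    (hU : S.TreeOpen U) {x : T} (hx : S.TStationary (S.above x ∩ U)) :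
    S.TStationary (S.above x ∩ S.prune U) := by
  by_contra hns
  obtain ⟨C₀, hC₀, hdisj₀⟩ := not_isStationaryIn_iff.1 hns
  obtain ⟨E, hE, hEdisj⟩ := S.exists_isClubIn_forall_height_notMem hS fun y => S.above y ∩ U
  have hF := hE.inter hC₀
  obtain ⟨_, ⟨y, ⟨hxy, hyU⟩, rfl⟩, hyF, hyacc⟩ := hx _ (hF.inter (isClubIn_setOf_isAccPt hF.2))
  obtain ⟨w, hxw, hwy, hwU, hwE, hwC₀⟩ := hU.exists_between_height_mem hyU hxy hyacc
  have hw : ¬ S.TStationary (S.above w ∩ U) := fun hw =>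
    Set.disjoint_left.1 hdisj₀ ⟨w, ⟨hxw, hwU, hw⟩, rfl⟩ hwC₀
  exact hEdisj w hw _ hyF.1 (S.height_lt_height hwy) ⟨y, ⟨hwy, hyU⟩, rfl⟩

end TreeOrder

/-- If `U` is open in the tree topology of an `ω₁`-tree, then `(U^p)^p = U^p`. -/
theorem prune_idempotent {T : Type} (S : TreeOrder T) (hT : S.IsOmega1Tree)
    (U : Set T) (hU : S.TreeOpen U) :
    S.prune (S.prune U) = S.prune U :=
  Set.Subset.antisymm (fun _ hx => hx.1) fun _ hx =>
    ⟨hx, S.tStationary_above_inter_prune hT.2.1 hU hx.2⟩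
end

section
/- Let T be an Aronszajn tree and suppose there is an order preserving map φ : T → ℝ. Then there is a continuous order preserving map ψ : T → ℝ (continuity with respect to the tree topology), namely ψ(y) = φ(y) when height(y) is not a limit ordinal and ψ(y) = sup{φ(x) : x ◁ y} when height(y) is a limit ordinal. -/
/-! At a node `y` of limit height the value `ψ y = sup {φ x : x ◁ y}` is approached from below
by the values `φ x`, `x ◁ y`, and on the interval `x↑ ∩ y↓` the map `ψ` is squeezed between
`φ x` and `ψ y`; this is continuity at `y`. Strict monotonicity survives the passage to suprema
because below a node of limit height every predecessor has a further node above it. -/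

namespace TreeOrder

variable {T : Type} (S : TreeOrder T)

theorem below_nonempty_of_isSuccLimit {y : T} (hy : Order.IsSuccLimit (S.height y)) :
    (S.below y).Nonempty := by
  have := S.wellOrdered y
  obtain ⟨z⟩ : Nonempty {z : T // S.lt z y} :=
    not_isEmpty_iff.1 fun h => hy.ne_bot (Ordinal.type_eq_zero_iff_isEmpty.2 h)
  exact ⟨z.1, z.2⟩

theorem exists_between_of_isSuccLimit {x y : T} (hxy : S.lt x y)
    (hy : Order.IsSuccLimit (S.height y)) : ∃ z, S.lt x z ∧ S.lt z y := by
  have := S.wellOrdered y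
  let r : {z : T // S.lt z y} → {z : T // S.lt z y} → Prop := fun a b => S.lt a.1 b.1
  obtain ⟨z, hz⟩ := Ordinal.typein_surj r (hy.succ_lt (Ordinal.typein_lt_type r ⟨x, hxy⟩))
  refine ⟨z.1, (Ordinal.typein_lt_typein r (a := ⟨x, hxy⟩) (b := z)).1 ?_, z.2⟩
  rw [hz]
  exact Order.lt_succ _

variable {B : Type} [ConditionallyCompleteLinearOrder B]

noncomputable def limitSup (φ : T → B) (y : T) : B :=
  open Classical in
  if Order.IsSuccLimit (S.height y) then sSup (φ '' S.below y) else φ y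

theorem limitSup_of_isSuccLimit (φ : T → B) {y : T} (hy : Order.IsSuccLimit (S.height y)) :
    S.limitSup φ y = sSup (φ '' S.below y) :=
  if_pos hy

theorem limitSup_of_not_isSuccLimit (φ : T → B) {y : T} (hy : ¬ Order.IsSuccLimit (S.height y)) :
    S.limitSup φ y = φ y :=
  if_neg hy


variable {S} {φ : T → B}

theorem bddAbove_image_below (hφ : ∀ x y, S.lt x y → φ x < φ y) (y : T) :
    BddAbove (φ '' S.below y) :=
  ⟨φ y, by rintro _ ⟨x, hx, rfl⟩; exact (hφ x y hx).le⟩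

theorem limitSup_le (hφ : ∀ x y, S.lt x y → φ x < φ y) (z : T) : S.limitSup φ z ≤ φ z := by
  by_cases hz : Order.IsSuccLimit (S.height z)
  · rw [limitSup_of_isSuccLimit S φ hz]
    exact csSup_le ((S.below_nonempty_of_isSuccLimit hz).image φ)
      (by rintro _ ⟨x, hx, rfl⟩; exact (hφ x z hx).le)
  · exact (limitSup_of_not_isSuccLimit S φ hz).le

theorem le_limitSup (hφ : ∀ x y, S.lt x y → φ x < φ y) {x z : T} (hxz : S.lt x z) :
    φ x ≤ S.limitSup φ z := by
  by_cases hz : Order.IsSuccLimit (S.height z)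
  · rw [limitSup_of_isSuccLimit S φ hz]
    exact le_csSup (bddAbove_image_below hφ z) ⟨x, hxz, rfl⟩
  · rw [limitSup_of_not_isSuccLimit S φ hz]
    exact (hφ x z hxz).le

theorem limitSup_lt_limitSup (hφ : ∀ x y, S.lt x y → φ x < φ y) {x y : T} (hxy : S.lt x y) :
    S.limitSup φ x < S.limitSup φ y := by
  by_cases hy : Order.IsSuccLimit (S.height y)
  · obtain ⟨z, hxz, hzy⟩ := S.exists_between_of_isSuccLimit hxy hy
    calc S.limitSup φ x ≤ φ x := limitSup_le hφ x
      _ < φ z := hφ x z hxz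
      _ ≤ S.limitSup φ y := le_limitSup hφ hzy
  · calc S.limitSup φ x ≤ φ x := limitSup_le hφ x
      _ < φ y := hφ x y hxy
      _ = S.limitSup φ y := (limitSup_of_not_isSuccLimit S φ hy).symm

theorem tContinuous_limitSup [TopologicalSpace B] [OrderTopology B]
    (hφ : ∀ x y, S.lt x y → φ x < φ y) :
    S.TContinuous (S.limitSup φ) := by
  intro V hV y hy hlim
  obtain ⟨x₀, hx₀⟩ := S.below_nonempty_of_isSuccLimit hlim
  obtain ⟨l, hl, hlV⟩ := exists_Ioc_subset_of_mem_nhds (hV.mem_nhds hy)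
    ⟨_, limitSup_lt_limitSup hφ hx₀⟩
  rw [limitSup_of_isSuccLimit S φ hlim] at hl
  obtain ⟨_, ⟨x, hxy, rfl⟩, hlx⟩ :=
    exists_lt_of_lt_csSup ((S.below_nonempty_of_isSuccLimit hlim).image φ) hl
  refine ⟨x, hxy, fun z hxz hzy => hlV ⟨hlx.trans_le (le_limitSup hφ hxz), ?_⟩⟩
  exact (limitSup_le hφ z).trans (le_limitSup hφ hzy)


end TreeOrder

theorem continuous_from_order_preserving_general {T : Type} (S : TreeOrder T)
    (φ : T → ℝ) (hφ : ∀ x y, S.lt x y → φ x < φ y) :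
    ∃ ψ : T → ℝ, S.TContinuous ψ ∧ (∀ x y, S.lt x y → ψ x < ψ y) ∧
      (∀ y, ¬ Order.IsSuccLimit (S.height y) → ψ y = φ y) ∧
      (∀ y, Order.IsSuccLimit (S.height y) → ψ y = sSup (φ '' S.below y)) :=
  ⟨S.limitSup φ, TreeOrder.tContinuous_limitSup hφ,
    fun _ _ => TreeOrder.limitSup_lt_limitSup hφ,
    fun _ => S.limitSup_of_not_isSuccLimit φ, fun _ => S.limitSup_of_isSuccLimit φ⟩

/-- If `T` is an Aronszajn tree with an order preserving map `φ : T → ℝ`, then the map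
`ψ` with `ψ y = φ y` at non-limit heights and `ψ y = sup {φ x : x ◁ y}` at limit heights
is a continuous order preserving map `ψ : T → ℝ`. -/
theorem continuous_from_order_preserving {T : Type} (S : TreeOrder T)
    (hT : S.IsAronszajn) (φ : T → ℝ) (hφ : ∀ x y, S.lt x y → φ x < φ y) :
    ∃ ψ : T → ℝ, S.TContinuous ψ ∧ (∀ x y, S.lt x y → ψ x < ψ y) ∧
      (∀ y, ¬ Order.IsSuccLimit (S.height y) → ψ y = φ y) ∧
      (∀ y, Order.IsSuccLimit (S.height y) → ψ y = sSup (φ '' S.below y)) :=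
  continuous_from_order_preserving_general S φ hφ
end
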